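/- arXiv:2311.17120 — 4 statements merged into one kernel-verified Lean document; each statement's English description precedes it below -/
import Mathlib

section
/- Suppose gcd(N₁, N₂) ≤ 2 and the state X has at least one entry equal to 1 and at least one entry equal to 2. Then X does not belong to C; that is, for every t₀ there exists t ≥ t₀ such that f^t(X) ∉ B (no state containing a particle of each type is a state of free movement when the greatest common divisor of N₁ and N₂ is less than 3). -/
namespace BML

variable {N₁ N₂ : ℕ}

/-- Half-step: every first-type particle (entry 1) moves one cell along its row. -/
def U (X : ZMod N₁ × ZMod N₂ → Fin 3) : ZMod N₁ × ZMod N₂ → Fin 3 :=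
  fun p =>
    if X p = 1 ∧ X (p.1, p.2 + 1) = 0 then 0
    else if X p = 0 ∧ X (p.1, p.2 - 1) = 1 then 1
    else X p

/-- Half-step: every second-type particle (entry 2) moves one cell along its column. -/
def Ymap (V : ZMod N₁ × ZMod N₂ → Fin 3) : ZMod N₁ × ZMod N₂ → Fin 3 :=
  fun p =>
    if V p = 2 ∧ V (p.1 + 1, p.2) = 0 then 0
    else if V p = 0 ∧ V (p.1 - 1, p.2) = 2 then 2
    else V p

/-- One step of the dynamics. -/
def f (X : ZMod N₁ × ZMod N₂ → Fin 3) : ZMod N₁ × ZMod N₂ → Fin 3 :=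
  Ymap (U X)

/-- States in which every particle moves at this step. -/
def inB (X : ZMod N₁ × ZMod N₂ → Fin 3) : Prop :=
  (∀ i j, X (i, j) = 1 → X (i, j + 1) = 0) ∧
  (∀ i j, U X (i, j) = 2 → U X (i + 1, j) = 0)

/-- States of free movement. -/
def inC (X : ZMod N₁ × ZMod N₂ → Fin 3) : Prop :=
  ∃ t₀ : ℕ, ∀ t ≥ t₀, inB (f^[t] X)

end BML

section Aux
open BML

variable {N₁ N₂ : ℕ}

lemma aux_Ymap_one {V : ZMod N₁ × ZMod N₂ → Fin 3} {q} (h : V q = 1) : Ymap V q = 1 := by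
  unfold Ymap
  rw [if_neg (by simp [h]), if_neg (by simp [h])]
  exact h

lemma aux_U_two {X : ZMod N₁ × ZMod N₂ → Fin 3} {q} (h : X q = 2) : U X q = 2 := by
  unfold U
  rw [if_neg (by simp [h]), if_neg (by simp [h])]
  exact h

lemma aux_ex1 {X : ZMod N₁ × ZMod N₂ → Fin 3} (h : ∃ p, X p = 1) : ∃ p, f X p = 1 := by
  obtain ⟨⟨i, j⟩, hp⟩ := h
  by_cases h0 : X (i, j + 1) = 0
  · refine ⟨(i, j + 1), aux_Ymap_one ?_⟩
    unfold U
    rw [if_neg (by simp [h0]), if_pos ⟨h0, by simpa using hp⟩]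
  · refine ⟨(i, j), aux_Ymap_one ?_⟩
    unfold U
    rw [if_neg (by simp [h0]), if_neg (by simp [hp])]
    exact hp

lemma aux_ex2 {X : ZMod N₁ × ZMod N₂ → Fin 3} (h : ∃ p, X p = 2) : ∃ p, f X p = 2 := by
  obtain ⟨⟨i, j⟩, hp⟩ := h
  have hU : U X (i, j) = 2 := aux_U_two hp
  by_cases h0 : U X (i + 1, j) = 0
  · refine ⟨(i + 1, j), ?_⟩
    unfold f Ymap
    rw [if_neg (by simp [h0]), if_pos ⟨h0, by simpa using hU⟩]
  · refine ⟨(i, j), ?_⟩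
    unfold f Ymap
    rw [if_neg (by simp [h0]), if_neg (by simp [hU])]
    exact hU

lemma aux_move1 {X : ZMod N₁ × ZMod N₂ → Fin 3} (h : inB X) {i : ZMod N₁} {j : ZMod N₂}
    (hx : X (i, j) = 1) : f X (i, j + 1) = 1 := by
  have h0 : X (i, j + 1) = 0 := h.1 i j hx
  refine aux_Ymap_one ?_
  unfold U
  rw [if_neg (by simp [h0]), if_pos ⟨h0, by simpa using hx⟩]

lemma aux_move2 {X : ZMod N₁ × ZMod N₂ → Fin 3} (h : inB X) {i : ZMod N₁} {j : ZMod N₂}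
    (hx : X (i, j) = 2) : f X (i + 1, j) = 2 := by
  have hU : U X (i, j) = 2 := aux_U_two hx
  have h0 : U X (i + 1, j) = 0 := h.2 i j hU
  unfold f Ymap
  rw [if_neg (by simp [h0]), if_pos ⟨h0, by simpa using hU⟩]

lemma aux_crt (hN₁ : 0 < N₁) (hN₂ : 0 < N₂) (hgcd : Nat.gcd N₁ N₂ ≤ 2)
    (x : ZMod N₁) (y : ZMod N₂) :
    ∃ s : ℕ, ((s : ZMod N₁) = x ∧ (s : ZMod N₂) = y) ∨
      ((s : ZMod N₁) = x - 1 ∧ (s : ZMod N₂) = y) := by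
  haveI : NeZero N₁ := ⟨hN₁.ne'⟩
  haveI : NeZero N₂ := ⟨hN₂.ne'⟩
  set a := x.val with ha
  set b := y.val with hb
  have hxa : ((a : ℕ) : ZMod N₁) = x := by simp [ha]
  have hyb : ((b : ℕ) : ZMod N₂) = y := by simp [hb]
  by_cases h : a ≡ b [MOD Nat.gcd N₁ N₂]
  · obtain ⟨t, ht1, ht2⟩ := Nat.chineseRemainder' h
    exact ⟨t, Or.inl ⟨by rw [(ZMod.natCast_eq_natCast_iff _ _ _).mpr ht1, hxa],
      by rw [(ZMod.natCast_eq_natCast_iff _ _ _).mpr ht2, hyb]⟩⟩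
  · have hg2 : Nat.gcd N₁ N₂ = 2 := by
      have hge : 1 ≤ Nat.gcd N₁ N₂ := Nat.gcd_pos_of_pos_left _ hN₁
      rcases Nat.lt_or_ge (Nat.gcd N₁ N₂) 2 with hlt | hge2
      · exfalso; apply h
        have : Nat.gcd N₁ N₂ = 1 := by omega
        simp [this, Nat.modEq_one]
      · omega
    have hd1 : 2 ∣ N₁ := hg2 ▸ Nat.gcd_dvd_left N₁ N₂
    set c := (x - 1).val with hc
    have hxc : ((c : ℕ) : ZMod N₁) = x - 1 := by simp [hc]
    have hca : (c + 1 : ℕ) ≡ a [MOD N₁] := by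
      rw [← ZMod.natCast_eq_natCast_iff]
      push_cast
      rw [hxc, hxa]
      ring
    have hca2 : (c + 1) % 2 = a % 2 := Nat.ModEq.of_dvd hd1 hca
    have hab2 : a % 2 ≠ b % 2 := by
      intro heq; exact h (by rwa [hg2])
    have hcb : c ≡ b [MOD Nat.gcd N₁ N₂] := by
      rw [hg2]
      show c % 2 = b % 2
      omega
    obtain ⟨t, ht1, ht2⟩ := Nat.chineseRemainder' hcb
    exact ⟨t, Or.inr ⟨by rw [(ZMod.natCast_eq_natCast_iff _ _ _).mpr ht1, hxc],
      by rw [(ZMod.natCast_eq_natCast_iff _ _ _).mpr ht2, hyb]⟩⟩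

end Aux

open BML in
theorem stmt_0 (N₁ N₂ : ℕ) (hN₁ : 0 < N₁) (hN₂ : 0 < N₂)
    (hgcd : Nat.gcd N₁ N₂ ≤ 2)
    (X : ZMod N₁ × ZMod N₂ → Fin 3)
    (h1 : ∃ p, X p = 1) (h2 : ∃ p, X p = 2) :
    ∀ t₀ : ℕ, ∃ t ≥ t₀, ¬ inB (f^[t] X) := by
  intro t₀
  by_contra hcon
  push_neg at hcon
  -- particles of both types exist at time t₀
  have hex1 : ∀ t : ℕ, ∃ p, f^[t] X p = 1 := by
    intro t; induction t with
    | zero => exact h1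
    | succ t ih => rw [Function.iterate_succ_apply']; exact aux_ex1 ih
  have hex2 : ∀ t : ℕ, ∃ p, f^[t] X p = 2 := by
    intro t; induction t with
    | zero => exact h2
    | succ t ih => rw [Function.iterate_succ_apply']; exact aux_ex2 ih
  set Z := f^[t₀] X with hZ
  have H : ∀ s : ℕ, inB (f^[s] Z) := by
    intro s
    rw [hZ, ← Function.iterate_add_apply]
    exact hcon (s + t₀) (Nat.le_add_left _ _)
  obtain ⟨⟨i₁, j₁⟩, hp1⟩ := hex1 t₀
  obtain ⟨⟨i₂, j₂⟩, hp2⟩ := hex2 t₀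
  have Htraj1 : ∀ s : ℕ, f^[s] Z (i₁, j₁ + (s : ZMod N₂)) = 1 := by
    intro s; induction s with
    | zero => simpa using hp1
    | succ s ih =>
      rw [Function.iterate_succ_apply']
      have := aux_move1 (H s) ih
      convert this using 2
      push_cast; ring
  have Htraj2 : ∀ s : ℕ, f^[s] Z (i₂ + (s : ZMod N₁), j₂) = 2 := by
    intro s; induction s with
    | zero => simpa using hp2
    | succ s ih =>
      rw [Function.iterate_succ_apply']
      have := aux_move2 (H s) ih
      convert this using 2
      push_cast; ring
  obtain ⟨s, hs⟩ := aux_crt hN₁ hN₂ hgcd (i₁ - i₂) (j₂ - j₁ - 1)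
  set W := f^[s] Z with hW
  have hB := H s
  have h1W : W (i₁, j₁ + (s : ZMod N₂)) = 1 := Htraj1 s
  have h2W : W (i₂ + (s : ZMod N₁), j₂) = 2 := Htraj2 s
  rcases hs with ⟨hs1, hs2⟩ | ⟨hs1, hs2⟩
  · -- collision in U: the 2 sits right ahead of the 1
    have hpos1 : i₂ + (s : ZMod N₁) = i₁ := by rw [hs1]; ring
    have hpos2 : j₂ = j₁ + (s : ZMod N₂) + 1 := by rw [hs2]; ring
    rw [hpos1, hpos2] at h2W
    have h0 : W (i₁, j₁ + (s : ZMod N₂) + 1) = 0 := hB.1 _ _ h1W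
    rw [h0] at h2W
    exact absurd h2W (by decide)
  · -- collision in Ymap: after U, the 1 sits right ahead of the 2
    have hpos1 : i₂ + (s : ZMod N₁) + 1 = i₁ := by rw [hs1]; ring
    have hpos2 : j₂ = j₁ + (s : ZMod N₂) + 1 := by rw [hs2]; ring
    have h0 : W (i₁, j₁ + (s : ZMod N₂) + 1) = 0 := hB.1 _ _ h1W
    have hU1 : U W (i₁, j₁ + (s : ZMod N₂) + 1) = 1 := by
      unfold U
      rw [if_neg (by simp [h0]), if_pos ⟨h0, by simpa using h1W⟩]
    have hU2 : U W (i₂ + (s : ZMod N₁), j₂) = 2 := aux_U_two h2W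
    have := hB.2 _ _ hU2
    rw [hpos1, hpos2, hU1] at this
    exact absurd this (by decide)
end

section
/- Suppose gcd(N₁, N₂) ≤ 2 and the untyped state Z has at least two entries equal to 1. Then Z is not a state of free movement: for every t₀ there exist an r-chain Z = Z₀ r Z₁ r ⋯ r Z_t with t ≥ t₀ and a typing X of Z_t such that X ∉ B. -/
namespace BML

/-- `X` is a typing of the untyped state `Z`: the occupied cells coincide. -/
def Typing (X : ZMod N₁ × ZMod N₂ → Fin 3) (Z : ZMod N₁ × ZMod N₂ → Fin 2) : Prop :=
  ∀ p, X p ≠ 0 ↔ Z p ≠ 0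

/-- Forget the types of the particles: replace every entry 2 with 1. -/
def untype (X : ZMod N₁ × ZMod N₂ → Fin 3) : ZMod N₁ × ZMod N₂ → Fin 2 :=
  fun p => if X p = 0 then 0 else 1

/-- The transition relation on untyped states: `Z r W` iff some typing `X` of `Z`
satisfies `untype (f X) = W`. -/
def rel (Z W : ZMod N₁ × ZMod N₂ → Fin 2) : Prop :=
  ∃ X : ZMod N₁ × ZMod N₂ → Fin 3, Typing X Z ∧ untype (f X) = W

end BML

namespace BML

variable {N₁ N₂ : ℕ}

/-- `b` is a (right / down / down-left) neighbour of `a`. -/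
def Adj (a b : ZMod N₁ × ZMod N₂) : Prop :=
  b = (a.1, a.2 + 1) ∨ b = (a.1 + 1, a.2) ∨ b = (a.1 + 1, a.2 - 1)

/-- Some two occupied cells are adjacent. -/
def hasAdj (W : ZMod N₁ × ZMod N₂ → Fin 2) : Prop :=
  ∃ a b, W a ≠ 0 ∧ W b ≠ 0 ∧ Adj a b

lemma noadj {W : ZMod N₁ × ZMod N₂ → Fin 2} (h : ¬ hasAdj W)
    {a b : ZMod N₁ × ZMod N₂} (ha : W a ≠ 0) (hab : Adj a b) : W b = 0 := by
  by_contra hb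
  exact h ⟨a, b, ha, hb, hab⟩

lemma untype_ne (X : ZMod N₁ × ZMod N₂ → Fin 3) (p : ZMod N₁ × ZMod N₂) :
    untype X p ≠ 0 ↔ X p ≠ 0 := by
  unfold untype
  by_cases h : X p = 0 <;> simp [h]

lemma U_eq_of_no_one (X : ZMod N₁ × ZMod N₂ → Fin 3) (h : ∀ p, X p ≠ 1) : U X = X := by
  funext p
  unfold U
  rw [if_neg (fun hc => h p hc.1), if_neg (fun hc => h (p.1, p.2 - 1) hc.2)]

/-- The all-type-2 typing of an untyped state. -/
def Xall2 (W : ZMod N₁ × ZMod N₂ → Fin 2) : ZMod N₁ × ZMod N₂ → Fin 3 :=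
  fun r => if W r = 0 then 0 else 2

lemma Xall2_no_one (W : ZMod N₁ × ZMod N₂ → Fin 2) (p : ZMod N₁ × ZMod N₂) :
    Xall2 W p ≠ 1 := by
  unfold Xall2; split_ifs <;> decide

lemma typing_all2 (W : ZMod N₁ × ZMod N₂ → Fin 2) : Typing (Xall2 W) W := by
  intro p
  unfold Xall2
  by_cases h : W p = 0 <;> simp [h]

/-- Where a particle goes under the all-2 step. -/
def g2 (W : ZMod N₁ × ZMod N₂ → Fin 2) (p : ZMod N₁ × ZMod N₂) : ZMod N₁ × ZMod N₂ :=
  if W (p.1 + 1, p.2) = 0 then (p.1 + 1, p.2) else p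

lemma g2_occ {W : ZMod N₁ × ZMod N₂ → Fin 2} {p : ZMod N₁ × ZMod N₂} (hp : W p ≠ 0) :
    untype (f (Xall2 W)) (g2 W p) ≠ 0 := by
  rw [untype_ne]
  have hU : U (Xall2 W) = Xall2 W := U_eq_of_no_one _ (Xall2_no_one W)
  show Ymap (U (Xall2 W)) _ ≠ 0
  rw [hU]
  unfold g2
  by_cases h1 : W (p.1 + 1, p.2) = 0
  · rw [if_pos h1]
    unfold Ymap
    have e0 : Xall2 W (p.1 + 1, p.2) = 0 := by unfold Xall2; rw [if_pos h1]
    rw [if_neg (fun hc => by rw [e0] at hc; exact absurd hc.1 (by decide))]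
    have e1 : ((p.1 + 1 : ZMod N₁), p.2).1 - 1 = p.1 := by simp
    have e2 : Xall2 W (((p.1+1 : ZMod N₁), p.2).1 - 1, ((p.1+1:ZMod N₁), p.2).2) = 2 := by
      show Xall2 W _ = 2
      rw [e1]; unfold Xall2; rw [if_neg hp]
    rw [if_pos ⟨e0, e2⟩]
    decide
  · rw [if_neg h1]
    unfold Ymap
    have e2 : Xall2 W p = 2 := by unfold Xall2; rw [if_neg hp]
    have e3 : Xall2 W (p.1 + 1, p.2) = 2 := by unfold Xall2; rw [if_neg h1]
    rw [if_neg (fun hc => by rw [e3] at hc; exact absurd hc.2 (by decide)),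
        if_neg (fun hc => by rw [e2] at hc; exact absurd hc.1 (by decide)), e2]
    decide

lemma g2_inj {W : ZMod N₁ × ZMod N₂ → Fin 2} {p q : ZMod N₁ × ZMod N₂}
    (hp : W p ≠ 0) (hq : W q ≠ 0) (hpq : p ≠ q) : g2 W p ≠ g2 W q := by
  unfold g2
  split_ifs with h1 h2 h2
  · intro h
    apply hpq
    have h1' : p.1 + 1 = q.1 + 1 := (Prod.mk.injEq _ _ _ _ ▸ h).1
    have h2' : p.2 = q.2 := (Prod.mk.injEq _ _ _ _ ▸ h).2
    exact Prod.ext (by linear_combination h1') h2'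
  · intro h; rw [h] at h1; exact hq h1
  · intro h; rw [← h] at h2; exact hp h2
  · exact hpq

/-- The typing where the particle at `p` is type 1 and all others type 2. -/
def gX (W : ZMod N₁ × ZMod N₂ → Fin 2) (p : ZMod N₁ × ZMod N₂) :
    ZMod N₁ × ZMod N₂ → Fin 3 :=
  fun r => if r = p then 1 else if W r = 0 then 0 else 2

lemma des_typing {W : ZMod N₁ × ZMod N₂ → Fin 2} {p : ZMod N₁ × ZMod N₂} (hp : W p ≠ 0) :
    Typing (gX W p) W := by
  intro r
  unfold gX
  by_cases h : r = p
  · subst h; simp [hp]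
  · rw [if_neg h]
    by_cases h2 : W r = 0 <;> simp [h2]

lemma des_step {W : ZMod N₁ × ZMod N₂ → Fin 2} {p : ZMod N₁ × ZMod N₂}
    (hp : W p ≠ 0) (hna : ¬ hasAdj W) :
    untype (f (gX W p)) (p.1, p.2 + 1) ≠ 0 ∧
    ∀ q, W q ≠ 0 → q ≠ p → untype (f (gX W p)) (q.1 + 1, q.2) ≠ 0 := by
  set X := gX W p with hX
  have hH : W (p.1, p.2 + 1) = 0 := noadj hna hp (Or.inl rfl)
  have hpp' : (p.1, p.2 + 1) ≠ p := fun h => hp (h ▸ hH)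
  -- X values
  have hXp : X p = 1 := by unfold X; unfold gX; rw [if_pos rfl]
  have hXp' : X (p.1, p.2 + 1) = 0 := by
    unfold X; unfold gX; rw [if_neg hpp', if_pos hH]
  -- U X at p' = (p.1, p.2+1) is 1
  have hUp' : U X (p.1, p.2 + 1) = 1 := by
    unfold U
    rw [if_neg (fun hc => by rw [hXp'] at hc; exact absurd hc.1 (by decide))]
    have e : ((p.1 : ZMod N₁), p.2 + 1).2 - 1 = p.2 := by simp
    have e2 : X (((p.1 : ZMod N₁), p.2+1).1, ((p.1:ZMod N₁), p.2 + 1).2 - 1) = 1 := by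
      show X (p.1, _) = 1
      rw [e]; exact hXp
    rw [if_pos ⟨hXp', e2⟩]
  constructor
  · rw [untype_ne]
    show Ymap (U X) _ ≠ 0
    unfold Ymap
    rw [if_neg (fun hc => by rw [hUp'] at hc; exact absurd hc.1 (by decide)),
        if_neg (fun hc => by rw [hUp'] at hc; exact absurd hc.1 (by decide)), hUp']
    decide
  · intro q hq hqp
    have hqV : W (q.1 + 1, q.2) = 0 := noadj hna hq (Or.inr (Or.inl rfl))
    have hqAD : W (q.1 + 1, q.2 - 1) = 0 := noadj hna hq (Or.inr (Or.inr rfl))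
    have hq'p : (q.1 + 1, q.2) ≠ p := fun h => hp (h ▸ hqV)
    have hadp : (q.1 + 1, q.2 - 1) ≠ p := fun h => hp (h ▸ hqAD)
    -- X at q' is 0
    have hXq' : X (q.1 + 1, q.2) = 0 := by
      unfold X; unfold gX; rw [if_neg hq'p, if_pos hqV]
    -- X at q is 2
    have hXq : X q = 2 := by
      unfold X; unfold gX; rw [if_neg hqp, if_neg hq]
    -- U X at q' is 0
    have hUq' : U X (q.1 + 1, q.2) = 0 := by
      unfold U
      rw [if_neg (fun hc => by rw [hXq'] at hc; exact absurd hc.1 (by decide))]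
      have e2 : X (((q.1 + 1 : ZMod N₁), q.2).1, ((q.1+1:ZMod N₁), q.2).2 - 1) ≠ 1 := by
        show X (q.1 + 1, q.2 - 1) ≠ 1
        unfold X; unfold gX
        rw [if_neg hadp, if_pos hqAD]
        decide
      rw [if_neg (fun hc => e2 hc.2)]
      exact hXq'
    -- U X at q is 2
    have hUq : U X q = 2 := by
      unfold U
      rw [if_neg (fun hc => by rw [hXq] at hc; exact absurd hc.1 (by decide)),
          if_neg (fun hc => by rw [hXq] at hc; exact absurd hc.1 (by decide))]
      exact hXq
    rw [untype_ne]
    show Ymap (U X) _ ≠ 0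
    unfold Ymap
    rw [if_neg (fun hc => by rw [hUq'] at hc; exact absurd hc.1 (by decide))]
    have e1 : ((q.1 + 1 : ZMod N₁), q.2).1 - 1 = q.1 := by simp
    have e2 : U X (((q.1+1:ZMod N₁), q.2).1 - 1, ((q.1+1:ZMod N₁), q.2).2) = 2 := by
      show U X _ = 2
      rw [e1]; exact hUq
    rw [if_pos ⟨hUq', e2⟩]
    decide

end BML

namespace BML

variable {N₁ N₂ : ℕ}

lemma viol_vert {W : ZMod N₁ × ZMod N₂ → Fin 2} {a : ZMod N₁ × ZMod N₂}
    (ha : W a ≠ 0) (hb : W (a.1 + 1, a.2) ≠ 0) :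
    ∃ X : ZMod N₁ × ZMod N₂ → Fin 3, Typing X W ∧ ¬ inB X := by
  refine ⟨Xall2 W, typing_all2 W, fun hB => ?_⟩
  have hU : U (Xall2 W) = Xall2 W := U_eq_of_no_one _ (Xall2_no_one W)
  have h2 := hB.2 a.1 a.2
  rw [hU, show ((a.1 : ZMod N₁), a.2) = a from rfl] at h2
  have := h2 (by unfold Xall2; rw [if_neg ha])
  unfold Xall2 at this
  rw [if_neg hb] at this
  exact absurd this (by decide)

lemma viol {W : ZMod N₁ × ZMod N₂ → Fin 2} (h : hasAdj W) :
    ∃ X : ZMod N₁ × ZMod N₂ → Fin 3, Typing X W ∧ ¬ inB X := by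
  obtain ⟨a, b, ha, hb, hab⟩ := h
  rcases hab with hab | hab | hab
  · -- horizontal: all-1 typing
    set X : ZMod N₁ × ZMod N₂ → Fin 3 := fun r => if W r = 0 then 0 else 1 with hXdef
    refine ⟨X, fun r => ?_, fun hB => ?_⟩
    · show (if W r = 0 then (0 : Fin 3) else 1) ≠ 0 ↔ W r ≠ 0
      by_cases h2 : W r = 0 <;> simp [h2]
    · have h1 := hB.1 a.1 a.2
      rw [show ((a.1 : ZMod N₁), a.2) = a from rfl] at h1
      have hXa : X a = 1 := by
        show (if W a = 0 then (0 : Fin 3) else 1) = 1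
        rw [if_neg ha]
      have := h1 hXa
      rw [← hab] at this
      have hXb : X b = 1 := by
        show (if W b = 0 then (0 : Fin 3) else 1) = 1
        rw [if_neg hb]
      rw [hXb] at this
      exact absurd this (by decide)
  · exact viol_vert ha (hab ▸ hb)
  · by_cases hV : W (a.1 + 1, a.2) = 0
    · -- genuine anti-diagonal case
      subst hab
      have hanb : a ≠ (a.1 + 1, a.2 - 1) := by
        intro h
        have h1 : a.1 = a.1 + 1 := congrArg Prod.fst h
        exact ha (by rw [show a = ((a.1 + 1 : ZMod N₁), a.2) from Prod.ext h1 rfl]; exact hV)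
      set X : ZMod N₁ × ZMod N₂ → Fin 3 :=
        fun r => if r = (a.1 + 1, a.2 - 1) then 1 else if W r = 0 then 0 else 2 with hXdef
      have hcb : ((a.1 + 1 : ZMod N₁), a.2) ≠ (a.1 + 1, a.2 - 1) := by
        intro h
        exact hb (h ▸ hV)
      have hXa : X a = 2 := by
        show (if a = (a.1 + 1, a.2 - 1) then (1:Fin 3) else if W a = 0 then 0 else 2) = 2
        rw [if_neg hanb, if_neg ha]
      have hXc : X (a.1 + 1, a.2) = 0 := by
        show (if ((a.1+1:ZMod N₁), a.2) = (a.1 + 1, a.2 - 1) then (1:Fin 3)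
              else if W (a.1 + 1, a.2) = 0 then 0 else 2) = 0
        rw [if_neg hcb, if_pos hV]
      have hUa : U X a = 2 := by
        unfold U
        rw [if_neg (fun hc => by rw [hXa] at hc; exact absurd hc.1 (by decide)),
            if_neg (fun hc => by rw [hXa] at hc; exact absurd hc.1 (by decide))]
        exact hXa
      have hUc : U X (a.1 + 1, a.2) = 1 := by
        unfold U
        rw [if_neg (fun hc => by rw [hXc] at hc; exact absurd hc.1 (by decide))]
        have e2 : X (((a.1 + 1 : ZMod N₁), a.2).1, ((a.1 + 1 : ZMod N₁), a.2).2 - 1) = 1 := by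
          show (if ((a.1+1 : ZMod N₁), a.2 - 1) = (a.1 + 1, a.2 - 1) then (1:Fin 3)
                else if W ((a.1+1 : ZMod N₁), a.2 - 1) = 0 then 0 else 2) = 1
          rw [if_pos rfl]
        rw [if_pos ⟨hXc, e2⟩]
      refine ⟨X, fun r => ?_, fun hB => ?_⟩
      · show (if r = (a.1 + 1, a.2 - 1) then (1:Fin 3) else if W r = 0 then 0 else 2) ≠ 0 ↔ W r ≠ 0
        by_cases h1 : r = (a.1 + 1, a.2 - 1)
        · subst h1; simp [hb]
        · rw [if_neg h1]
          by_cases h2 : W r = 0 <;> simp [h2]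
      · have h2 := hB.2 a.1 a.2
        rw [show ((a.1 : ZMod N₁), a.2) = a from rfl] at h2
        have := h2 hUa
        rw [hUc] at this
        exact absurd this (by decide)
    · exact viol_vert ha hV

end BML

namespace BML

variable {N₁ N₂ : ℕ}

lemma endgame : ∀ (k : ℕ) (W : ZMod N₁ × ZMod N₂ → Fin 2) (p q : ZMod N₁ × ZMod N₂),
    W p ≠ 0 → W q ≠ 0 → p ≠ q →
    Adj (p.1, p.2 + (k : ZMod N₂)) (q.1 + (k : ZMod N₁), q.2) →
    ∃ n ≤ k, ∃ Zs : ℕ → (ZMod N₁ × ZMod N₂ → Fin 2),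
      Zs 0 = W ∧ (∀ s < n, rel (Zs s) (Zs (s + 1))) ∧ hasAdj (Zs n) := by
  intro k
  induction k with
  | zero =>
    intro W p q hp hq hpq hadj
    refine ⟨0, le_refl 0, fun _ => W, rfl, fun s hs => absurd hs (Nat.not_lt_zero s), ?_⟩
    refine ⟨p, q, hp, hq, ?_⟩
    simpa using hadj
  | succ k ih =>
    intro W p q hp hq hpq hadj
    by_cases hA : hasAdj W
    · exact ⟨0, Nat.zero_le _, fun _ => W, rfl, fun s hs => absurd hs (Nat.not_lt_zero s), hA⟩
    · -- designated step
      obtain ⟨hp', hq'⟩ := des_step hp hA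
      set W' := untype (f (gX W p)) with hW'
      have hrel : rel W W' := ⟨gX W p, des_typing hp, rfl⟩
      have hWq' : W' (q.1 + 1, q.2) ≠ 0 := hq' q hq (Ne.symm hpq)
      have hne : ((p.1 : ZMod N₁), p.2 + 1) ≠ (q.1 + 1, q.2) := by
        intro h
        apply hA
        refine ⟨q, p, hq, hp, Or.inr (Or.inr ?_)⟩
        have h1 : p.1 = q.1 + 1 := congrArg Prod.fst h
        have h2 : p.2 + 1 = q.2 := congrArg Prod.snd h
        exact Prod.ext h1 (by rw [← h2]; ring)
      have hadj' : Adj (((p.1 : ZMod N₁), p.2 + 1).1, ((p.1:ZMod N₁), p.2 + 1).2 + (k : ZMod N₂))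
          ((((q.1 : ZMod N₁) + 1, q.2).1 + (k : ZMod N₁), ((q.1:ZMod N₁)+1, q.2).2)) := by
        have e1 : (((p.1 : ZMod N₁), p.2 + 1).1, ((p.1:ZMod N₁), p.2 + 1).2 + (k : ZMod N₂))
            = ((p.1 : ZMod N₁), p.2 + ((k+1 : ℕ) : ZMod N₂)) := by
          refine Prod.ext rfl ?_
          show p.2 + 1 + (k : ZMod N₂) = p.2 + ((k+1 : ℕ) : ZMod N₂)
          push_cast
          ring
        have e2 : ((((q.1 : ZMod N₁) + 1, q.2).1 + (k : ZMod N₁), ((q.1:ZMod N₁)+1, q.2).2))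
            = ((q.1 : ZMod N₁) + ((k+1 : ℕ) : ZMod N₁), q.2) := by
          refine Prod.ext ?_ rfl
          show q.1 + 1 + (k : ZMod N₁) = q.1 + ((k+1 : ℕ) : ZMod N₁)
          push_cast
          ring
        rw [e1, e2]
        exact hadj
      obtain ⟨n, hn, Zs, hZs0, hZrel, hZadj⟩ :=
        ih W' (p.1, p.2 + 1) (q.1 + 1, q.2) hp' hWq' hne hadj'
      refine ⟨n + 1, Nat.succ_le_succ hn, fun s => if s = 0 then W else Zs (s - 1), rfl, ?_, ?_⟩
      · intro s hs
        match s with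
        | 0 =>
          simpa [hZs0] using hrel
        | (m + 1) =>
          have hm : m < n := by omega
          simpa using hZrel m hm
      · simpa using hZadj

/-- Phase 1: run the all-2 dynamics for `n` steps; two distinct particles survive. -/
lemma phase1 (Z : ZMod N₁ × ZMod N₂ → Fin 2)
    (hZ : ∃ p q : ZMod N₁ × ZMod N₂, p ≠ q ∧ Z p ≠ 0 ∧ Z q ≠ 0) :
    ∀ n : ℕ, ∃ Zs : ℕ → (ZMod N₁ × ZMod N₂ → Fin 2),
      Zs 0 = Z ∧ (∀ s < n, rel (Zs s) (Zs (s + 1))) ∧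
      ∃ p q : ZMod N₁ × ZMod N₂, p ≠ q ∧ Zs n p ≠ 0 ∧ Zs n q ≠ 0 := by
  intro n
  induction n with
  | zero =>
    exact ⟨fun _ => Z, rfl, fun s hs => absurd hs (Nat.not_lt_zero s), hZ⟩
  | succ n ih =>
    obtain ⟨Zs, h0, hrel, p, q, hpq, hp, hq⟩ := ih
    set W := Zs n with hWdef
    set W' := untype (f (Xall2 W)) with hW'def
    refine ⟨fun s => if s ≤ n then Zs s else W', by simp [h0], ?_, ?_⟩
    · intro s hs
      show rel (if s ≤ n then Zs s else W') (if s + 1 ≤ n then Zs (s + 1) else W')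
      by_cases h1 : s < n
      · rw [if_pos (by omega : s ≤ n), if_pos (by omega : s + 1 ≤ n)]
        exact hrel s h1
      · have hsn : s = n := by omega
        subst hsn
        rw [if_pos (le_refl s), if_neg (by omega : ¬ s + 1 ≤ s)]
        exact ⟨Xall2 W, typing_all2 W, rfl⟩
    · show ∃ p q, p ≠ q ∧ (if n + 1 ≤ n then Zs (n + 1) else W') p ≠ 0 ∧
          (if n + 1 ≤ n then Zs (n + 1) else W') q ≠ 0
      rw [if_neg (by omega : ¬ n + 1 ≤ n)]
      exact ⟨g2 W p, g2 W q, g2_inj hp hq hpq, g2_occ hp, g2_occ hq⟩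

end BML

namespace BML

variable {N₁ N₂ : ℕ}

lemma crt (hN₁ : 0 < N₁) (hN₂ : 0 < N₂) (hgcd : Nat.gcd N₁ N₂ ≤ 2)
    (p q : ZMod N₁ × ZMod N₂) :
    ∃ k : ℕ, Adj (p.1, p.2 + (k : ZMod N₂)) (q.1 + (k : ZMod N₁), q.2) := by
  haveI : NeZero N₁ := ⟨hN₁.ne'⟩
  haveI : NeZero N₂ := ⟨hN₂.ne'⟩
  have hdpos : 0 < Nat.gcd N₁ N₂ := Nat.gcd_pos_of_pos_left N₂ hN₁
  have main : ∀ (ζ₁ : ZMod N₁) (ζ₂ : ZMod N₂), ζ₁.val ≡ ζ₂.val [MOD Nat.gcd N₁ N₂] →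
      ∃ k : ℕ, (k : ZMod N₁) = ζ₁ ∧ (k : ZMod N₂) = ζ₂ := by
    intro ζ₁ ζ₂ h
    obtain ⟨k, hk1, hk2⟩ := Nat.chineseRemainder' h
    refine ⟨k, ?_, ?_⟩
    · rw [(ZMod.natCast_eq_natCast_iff _ _ _).mpr hk1]
      exact ZMod.natCast_rightInverse ζ₁
    · rw [(ZMod.natCast_eq_natCast_iff _ _ _).mpr hk2]
      exact ZMod.natCast_rightInverse ζ₂
  rcases (by omega : Nat.gcd N₁ N₂ = 1 ∨ Nat.gcd N₁ N₂ = 2) with hd | hd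
  · obtain ⟨k, e1, e2⟩ := main (p.1 - q.1) (q.2 - p.2 - 1) (by rw [hd]; exact Nat.modEq_one)
    refine ⟨k, ?_⟩
    unfold Adj
    refine Or.inl ?_
    show ((q.1 : ZMod N₁) + k, q.2) = (p.1, p.2 + (k : ZMod N₂) + 1)
    rw [Prod.mk.injEq]
    exact ⟨by rw [e1]; ring, by rw [e2]; ring⟩
  · have hdvd1 : 2 ∣ N₁ := hd ▸ Nat.gcd_dvd_left N₁ N₂
    have hdvd2 : 2 ∣ N₂ := hd ▸ Nat.gcd_dvd_right N₁ N₂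
    have cast1 : ∀ a : ZMod N₁, ((a.val : ℕ) : ZMod 2) = ZMod.castHom hdvd1 (ZMod 2) a := by
      intro a; rw [ZMod.castHom_apply, ZMod.natCast_val]
    have cast2 : ∀ a : ZMod N₂, ((a.val : ℕ) : ZMod 2) = ZMod.castHom hdvd2 (ZMod 2) a := by
      intro a; rw [ZMod.castHom_apply, ZMod.natCast_val]
    have modeq : ∀ (ζ₁ : ZMod N₁) (ζ₂ : ZMod N₂),
        ZMod.castHom hdvd1 (ZMod 2) ζ₁ = ZMod.castHom hdvd2 (ZMod 2) ζ₂ →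
        ζ₁.val ≡ ζ₂.val [MOD Nat.gcd N₁ N₂] := by
      intro ζ₁ ζ₂ h
      rw [hd]
      exact (ZMod.natCast_eq_natCast_iff _ _ _).mp (by rw [cast1, cast2, h])
    set A : ZMod 2 := ZMod.castHom hdvd1 (ZMod 2) (p.1 - q.1) with hA
    set B : ZMod 2 := ZMod.castHom hdvd2 (ZMod 2) (q.2 - p.2) with hB
    rcases (by decide : ∀ a : ZMod 2, a = 0 ∨ a = 1) (A + B) with hAB | hAB
    · -- parity even: use the anti-diagonal target
      have flip : ∀ a b : ZMod 2, a + b = 0 → a = b := by decide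
      obtain ⟨k, e1, e2⟩ := main (p.1 - q.1 + 1) (q.2 - p.2 + 1) (modeq _ _ (by
        rw [map_add, map_add, map_one, map_one, ← hA, ← hB, flip A B hAB]))
      refine ⟨k, ?_⟩
      unfold Adj
      refine Or.inr (Or.inr ?_)
      show ((q.1 : ZMod N₁) + k, q.2) = (p.1 + 1, p.2 + (k : ZMod N₂) - 1)
      rw [Prod.mk.injEq]
      exact ⟨by rw [e1]; ring, by rw [e2]; ring⟩
    · -- parity odd: use the horizontal target
      have flip2 : ∀ a b : ZMod 2, a + b = 1 → a = b - 1 := by decide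
      obtain ⟨k, e1, e2⟩ := main (p.1 - q.1) (q.2 - p.2 - 1) (modeq _ _ (by
        rw [show (ZMod.castHom hdvd2 (ZMod 2)) (q.2 - p.2 - 1) = B - 1 from by
              rw [map_sub, map_one, ← hB],
            ← hA]
        exact flip2 A B hAB))
      refine ⟨k, ?_⟩
      unfold Adj
      refine Or.inl ?_
      show ((q.1 : ZMod N₁) + k, q.2) = (p.1, p.2 + (k : ZMod N₂) + 1)
      rw [Prod.mk.injEq]
      exact ⟨by rw [e1]; ring, by rw [e2]; ring⟩

end BML

open BML in
theorem stmt_1 (N₁ N₂ : ℕ) (hN₁ : 0 < N₁) (hN₂ : 0 < N₂)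
    (hgcd : Nat.gcd N₁ N₂ ≤ 2)
    (Z : ZMod N₁ × ZMod N₂ → Fin 2)
    (hZ : ∃ p q : ZMod N₁ × ZMod N₂, p ≠ q ∧ Z p = 1 ∧ Z q = 1) :
    ∀ t₀ : ℕ, ∃ t ≥ t₀, ∃ Zs : ℕ → (ZMod N₁ × ZMod N₂ → Fin 2),
      Zs 0 = Z ∧ (∀ s < t, rel (Zs s) (Zs (s + 1))) ∧
      ∃ X : ZMod N₁ × ZMod N₂ → Fin 3, Typing X (Zs t) ∧ ¬ inB X := by
  intro t₀
  have hZ' : ∃ p q : ZMod N₁ × ZMod N₂, p ≠ q ∧ Z p ≠ 0 ∧ Z q ≠ 0 := by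
    obtain ⟨p, q, hpq, hp, hq⟩ := hZ
    exact ⟨p, q, hpq, by rw [hp]; decide, by rw [hq]; decide⟩
  obtain ⟨Zs, h0, hrel, p, q, hpq, hp, hq⟩ := phase1 Z hZ' t₀
  obtain ⟨k, hadj⟩ := crt hN₁ hN₂ hgcd p q
  obtain ⟨n, hn, Ws, hWs0, hWrel, hWadj⟩ := endgame k (Zs t₀) p q hp hq hpq hadj
  obtain ⟨X, hXt, hXB⟩ := viol hWadj
  refine ⟨t₀ + n, Nat.le_add_right t₀ n, fun s => if s ≤ t₀ then Zs s else Ws (s - t₀), ?_, ?_, ?_⟩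
  · show (if 0 ≤ t₀ then Zs 0 else Ws (0 - t₀)) = Z
    rw [if_pos (Nat.zero_le t₀)]
    exact h0
  · intro s hs
    show rel (if s ≤ t₀ then Zs s else Ws (s - t₀))
        (if s + 1 ≤ t₀ then Zs (s + 1) else Ws (s + 1 - t₀))
    by_cases h1 : s < t₀
    · rw [if_pos (by omega : s ≤ t₀), if_pos (by omega : s + 1 ≤ t₀)]
      exact hrel s h1
    · have hst : t₀ ≤ s := by omega
      rw [if_neg (by omega : ¬ s + 1 ≤ t₀)]
      have hsub : s + 1 - t₀ = (s - t₀) + 1 := by omega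
      rw [hsub]
      by_cases h2 : s = t₀
      · subst h2
        rw [if_pos (le_refl s), show s - s = 0 from by omega]
        have h3 := hWrel 0 (by omega)
        rw [hWs0] at h3
        exact h3
      · rw [if_neg (by omega : ¬ s ≤ t₀)]
        exact hWrel (s - t₀) (by omega)
  · show ∃ X, Typing X (if t₀ + n ≤ t₀ then Zs (t₀ + n) else Ws (t₀ + n - t₀)) ∧ ¬ inB X
    by_cases h1 : n = 0
    · subst h1
      rw [if_pos (by omega : t₀ + 0 ≤ t₀)]
      have h4 : Zs (t₀ + 0) = Ws 0 := by rw [Nat.add_zero, hWs0]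
      rw [h4]
      exact ⟨X, hXt, hXB⟩
    · rw [if_neg (by omega : ¬ t₀ + n ≤ t₀), show t₀ + n - t₀ = n from by omega]
      exact ⟨X, hXt, hXB⟩
end

section
/- Let N₁ = N₂ = 3 and let X be the state with X(0,0) = 1, X(0,2) = 2, and all other entries 0. Then f^t(X) ∈ B for every t ≥ 0 and f^3(X) = X; in particular X ∈ C, so a state of free movement containing both a first-type and a second-type particle exists when gcd(N₁, N₂) = 3. -/
open BML in
theorem stmt_5 (X : ZMod 3 × ZMod 3 → Fin 3)
    (h1 : X (0, 0) = 1) (h2 : X (0, 2) = 2)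
    (h0 : ∀ p : ZMod 3 × ZMod 3, p ≠ (0, 0) → p ≠ (0, 2) → X p = 0) :
    (∀ t : ℕ, inB (f^[t] X)) ∧ f^[3] X = X ∧ inC X := by

  have hX : X = (fun p => if p = (0, 0) then 1 else if p = (0, 2) then 2 else 0) := by
    funext p
    by_cases e1 : p = (0, 0)
    · subst e1; simp; exact h1
    · by_cases e2 : p = (0, 2)
      · subst e2; simp at e1 ⊢; rw [if_neg e1]; exact h2
      · rw [if_neg e1, if_neg e2]; exact h0 p e1 e2
  subst hX
  set X₀ : ZMod 3 × ZMod 3 → Fin 3 :=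
    (fun p => if p = (0, 0) then 1 else if p = (0, 2) then 2 else 0) with hX₀
  have h3 : f^[3] X₀ = X₀ := by decide
  have hAll : ∀ t : ℕ, inB (f^[t] X₀) := by
    intro t
    have key : f^[t] X₀ = f^[t % 3] X₀ := by
      conv_lhs => rw [← Nat.mod_add_div t 3, Function.iterate_add_apply]
      congr 1
      induction t / 3 with
      | zero => rfl
      | succ n ih => rw [Nat.mul_succ, Function.iterate_add_apply, h3, ih]
    rw [key]
    have hm : t % 3 = 0 ∨ t % 3 = 1 ∨ t % 3 = 2 := by omega
    rcases hm with h | h | h <;> rw [h]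
    · unfold inB; decide
    · unfold inB; decide
    · unfold inB; decide
  exact ⟨hAll, h3, 0, fun t _ => hAll t⟩
end

section
/- For the 2×2 BML system, every state is recurrent: for every state X there exists T ≥ 1 such that f^T(X) = X. -/
open BML

set_option maxHeartbeats 4000000 in
set_option maxRecDepth 100000 in
lemma BML_finj : Function.Injective (f (N₁ := 2) (N₂ := 2)) := by decide

open BML in
theorem stmt_6 (X : ZMod 2 × ZMod 2 → Fin 3) :
    ∃ T ≥ 1, f^[T] X = X := by
  have hbij : Function.Bijective (f (N₁ := 2) (N₂ := 2)) :=
    Finite.injective_iff_bijective.mp BML_finj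
  let e : Equiv.Perm (ZMod 2 × ZMod 2 → Fin 3) := Equiv.ofBijective _ hbij
  have he : ⇑e = f := rfl
  refine ⟨orderOf e, orderOf_pos e, ?_⟩
  have := Equiv.Perm.coe_pow e (orderOf e)
  rw [pow_orderOf_eq_one, he] at this
  have : f^[orderOf e] = id := this.symm
  simp [this]
end
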